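/- Let R be a coherent commutative ring, 𝔗 a torsion theory over R, 𝔞 a finitely generated ideal of R, and M an R-module with M ∈ 𝔗. Then the local cohomology modules H^i_𝔞(M) := colim_{n∈ℕ} Ext^i_R(R/𝔞ⁿ, M) belong to 𝔗 for all i ≥ 0. -/

import Mathlib

/-!
Over a coherent ring the kernel of any map between finite free modules is finitely generated,
so iterating syzygies resolves a finitely presented module such as `R ⧸ 𝔞ⁿ` by finite free
modules. Computed with this resolution, `Extⁱ(R ⧸ 𝔞ⁿ, M)` is a subquotient of
`Hom(Rᵏ, M) ≅ Mᵏ`, which lies in `𝔗`. The local cohomology module is a filtered colimit of these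
Ext modules, hence the directed union of their images, so it lies in `𝔗` as well.
-/

open CategoryTheory

universe u

noncomputable section

/-- A torsion theory over `R`: a class of `R`-modules closed under isomorphism, submodules,
quotient modules, extensions, and directed colimits (formulated as closure under directed
unions of submodules). -/
structure IsTorsionTheory (R : Type u) [CommRing R] (T : Set (ModuleCat.{u} R)) : Prop where
  mem_of_iso : ∀ {N N' : ModuleCat.{u} R}, (N ≅ N') → N ∈ T → N' ∈ T
  submodule_mem : ∀ {N : ModuleCat.{u} R}, N ∈ T → ∀ S : Submodule R N,
    ModuleCat.of R S ∈ T
  quotient_mem : ∀ {N : ModuleCat.{u} R}, N ∈ T → ∀ S : Submodule R N,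
    ModuleCat.of R (N ⧸ S) ∈ T
  ext_mem : ∀ {N : ModuleCat.{u} R} (S : Submodule R N),
    ModuleCat.of R S ∈ T → ModuleCat.of R (N ⧸ S) ∈ T → N ∈ T
  directed_mem : ∀ {N : ModuleCat.{u} R} {ι : Type u} [Nonempty ι] (S : ι → Submodule R N),
    Directed (· ≤ ·) S → (∀ i, ModuleCat.of R (S i) ∈ T) → iSup S = ⊤ → N ∈ T

variable {R : Type u} [CommRing R]

/-- A commutative ring is coherent if every finitely generated ideal is finitely presented. -/
def IsCoherentRing (R : Type u) [CommRing R] : Prop :=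
  ∀ I : Ideal R, I.FG → Module.FinitePresentation R I

universe v w

namespace IsTorsionTheory

variable {T : Set (ModuleCat.{u} R)} (hT : IsTorsionTheory R T)
include hT

section Modules

variable {A B C : Type u} [AddCommGroup A] [Module R A] [AddCommGroup B] [Module R B]
  [AddCommGroup C] [Module R C]

theorem mem_of_linearEquiv (e : A ≃ₗ[R] B) (hA : ModuleCat.of R A ∈ T) :
    ModuleCat.of R B ∈ T :=
  hT.mem_of_iso e.toModuleIso hA

theorem mem_of_injective (f : A →ₗ[R] B) (hf : Function.Injective f)
    (hB : ModuleCat.of R B ∈ T) : ModuleCat.of R A ∈ T :=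
  hT.mem_of_linearEquiv (LinearEquiv.ofInjective f hf).symm (hT.submodule_mem hB _)

theorem mem_of_surjective (f : A →ₗ[R] B) (hf : Function.Surjective f)
    (hA : ModuleCat.of R A ∈ T) : ModuleCat.of R B ∈ T :=
  hT.mem_of_linearEquiv (f.quotKerEquivOfSurjective hf) (hT.quotient_mem hA _)

theorem mem_of_exact (f : A →ₗ[R] B) (g : B →ₗ[R] C) (hf : Function.Injective f)
    (hfg : Function.Exact f g) (hg : Function.Surjective g) (hA : ModuleCat.of R A ∈ T)
    (hC : ModuleCat.of R C ∈ T) : ModuleCat.of R B ∈ T :=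
  hT.ext_mem (N := ModuleCat.of R B) (LinearMap.range f)
    (hT.mem_of_linearEquiv (LinearEquiv.ofInjective f hf) hA)
    (hT.mem_of_linearEquiv (hfg.linearEquivOfSurjective hg).symm hC)

theorem prod_mem (hA : ModuleCat.of R A ∈ T) (hB : ModuleCat.of R B ∈ T) :
    ModuleCat.of R (A × B) ∈ T :=
  hT.mem_of_exact _ _ LinearMap.inl_injective Function.Exact.inl_snd LinearMap.snd_surjective
    hA hB

theorem pi_mem (hA : ModuleCat.of R A ∈ T) (k : ℕ) : ModuleCat.of R (Fin k → A) ∈ T := by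
  induction k with
  | zero =>
    exact hT.mem_of_injective (0 : (Fin 0 → A) →ₗ[R] A) (Function.injective_of_subsingleton _) hA
  | succ k ih =>
    exact hT.mem_of_linearEquiv (Fin.consLinearEquiv R fun _ => A) (hT.prod_mem hA ih)

theorem linearMap_mem_of_finite [Module.Finite R A] (hB : ModuleCat.of R B ∈ T) :
    ModuleCat.of R (A →ₗ[R] B) ∈ T := by
  obtain ⟨k, p, hp⟩ := Module.Finite.exists_fin' R A
  exact hT.mem_of_injective (LinearMap.lcomp R B p) (LinearMap.lcomp_injective_of_surjective p hp)
    (hT.mem_of_linearEquiv (Module.piEquiv (Fin k) R B) (hT.pi_mem hB k))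

theorem mem_of_directed_iSup_eq_top {ι : Type w} [Small.{u} ι] [Nonempty ι]
    (S : ι → Submodule R A) (hS : Directed (· ≤ ·) S) (hmem : ∀ i, ModuleCat.of R (S i) ∈ T)
    (htop : iSup S = ⊤) : ModuleCat.of R A ∈ T :=
  have := (equivShrink ι).symm.nonempty
  hT.directed_mem (N := ModuleCat.of R A) (S ∘ (equivShrink ι).symm)
    (hS.comp_of_surjective (equivShrink ι).symm.surjective) (fun _ => hmem _)
    ((equivShrink ι).symm.iSup_comp.trans htop)

end Modules

theorem homology_mem (S : ShortComplex (ModuleCat.{u} R)) (hS : S.X₂ ∈ T) : S.homology ∈ T :=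
  hT.mem_of_iso S.moduleCatHomologyIso.symm (hT.quotient_mem (hT.submodule_mem hS _) _)

theorem ext_mem_of_projectiveResolution {M N : ModuleCat.{u} R} (hM : M ∈ T)
    (P : ProjectiveResolution N) (hP : ∀ n, Module.Finite R (P.complex.X n)) (i : ℕ) :
    ((Ext R (ModuleCat.{u} R) i).obj (Opposite.op N)).obj M ∈ T :=
  hT.mem_of_iso (P.isoExt i M).symm <| hT.homology_mem _ <|
    hT.mem_of_linearEquiv ModuleCat.homLinearEquiv.symm (hT.linearMap_mem_of_finite hM)

open Limits in
theorem colimit_mem {J : Type w} [SmallCategory J] [IsFiltered J] [UnivLE.{w, u}]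
    (G : J ⥤ ModuleCat.{u} R) [HasColimit G] (hG : ∀ j, G.obj j ∈ T) : colimit G ∈ T := by
  have : PreservesFilteredColimitsOfSize.{w, w} (forget (ModuleCat.{u} R)) :=
    preservesFilteredColimitsOfSize_of_univLE _
  have : Nonempty J := IsFiltered.nonempty
  let S : J → Submodule R ↑(colimit G) := fun j => LinearMap.range (colimit.ι G j).hom
  have hS : Directed (· ≤ ·) S := fun j j' => by
    refine ⟨IsFiltered.max j j', ?_, ?_⟩ <;>
      simp only [S, ← colimit.w G (IsFiltered.leftToMax j j'),
        ← colimit.w G (IsFiltered.rightToMax j j'), ModuleCat.hom_comp] <;>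
      exact LinearMap.range_comp_le_range _ _
  refine hT.mem_of_directed_iSup_eq_top S hS (fun j => hT.mem_of_surjective
    (colimit.ι G j).hom.rangeRestrict (LinearMap.surjective_rangeRestrict _) (hG j)) ?_
  refine eq_top_iff.2 fun x _ => ?_
  obtain ⟨j, y, rfl⟩ := Concrete.colimit_exists_rep G x
  exact Submodule.mem_iSup_of_mem j ⟨y, rfl⟩

end IsTorsionTheory

theorem Submodule.finitePresentation_of_fg_of_prod {M N : Type*} [AddCommGroup M] [Module R M]
    [AddCommGroup N] [Module R N]
    (hM : ∀ S : Submodule R M, S.FG → Module.FinitePresentation R S)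
    (hN : ∀ S : Submodule R N, S.FG → Module.FinitePresentation R S)
    (S : Submodule R (M × N)) (hS : S.FG) : Module.FinitePresentation R S := by
  have : Module.Finite R S := Module.Finite.iff_fg.mpr hS
  let f : S →ₗ[R] M := LinearMap.fst R M N ∘ₗ S.subtype
  have : Module.FinitePresentation R (LinearMap.range f) :=
    hM _ (Module.Finite.iff_fg.mp inferInstance)
  have hf : Function.Surjective f.rangeRestrict := f.surjective_rangeRestrict
  have : Module.Finite R (LinearMap.ker f) := Module.Finite.iff_fg.mpr
    (f.ker_rangeRestrict ▸ Module.FinitePresentation.fg_ker _ hf)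
  let g : LinearMap.ker f →ₗ[R] N :=
    LinearMap.snd R M N ∘ₗ S.subtype ∘ₗ (LinearMap.ker f).subtype
  have hg : Function.Injective g := fun x y hxy =>
    Subtype.ext <| Subtype.ext <| Prod.ext (x.2.trans y.2.symm) hxy
  have : Module.FinitePresentation R (LinearMap.range g) :=
    hN _ (Module.Finite.iff_fg.mp inferInstance)
  have : Module.FinitePresentation R (LinearMap.ker f.rangeRestrict) := by
    rw [f.ker_rangeRestrict]
    exact .of_equiv (R := R) (M := LinearMap.range g) (N := LinearMap.ker f)
      (LinearEquiv.ofInjective g hg).symm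
  exact Module.finitePresentation_of_ker f.rangeRestrict hf

section ProjectiveResolutionOfExact

variable {A : Type*} [Ring A]

theorem ModuleCat.comp_eq_zero_of_range_le_ker {L M P : ModuleCat.{v} A} (f : L ⟶ M)
    (g : M ⟶ P) (h : LinearMap.range f.hom ≤ LinearMap.ker g.hom) : f ≫ g = 0 := by
  ext x
  exact h ⟨x, rfl⟩

variable {N : ModuleCat.{v} A} (X : ℕ → ModuleCat.{v} A) [∀ n, Projective (X n)]
  (d : ∀ n, X (n + 1) ⟶ X n) (ε : X 0 ⟶ N)
  (hd : ∀ n, LinearMap.range (d (n + 1)).hom = LinearMap.ker (d n).hom)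
  (hd₀ : LinearMap.range (d 0).hom = LinearMap.ker ε.hom) (hε : Function.Surjective ε)

def ModuleCat.projectiveResolutionOfExact : ProjectiveResolution N where
  complex := ChainComplex.of X d fun n => comp_eq_zero_of_range_le_ker _ _ (hd n).le
  π := (ChainComplex.toSingle₀Equiv _ _).symm ⟨ε, by
    show ChainComplex.of.d X d (0 + 1) 0 ≫ ε = 0
    rw [ChainComplex.of_d]
    exact comp_eq_zero_of_range_le_ker _ _ hd₀.le⟩
  quasiIso := ⟨fun n => by
    cases n with
    | zero =>
      rw [ChainComplex.quasiIsoAt₀_iff, ShortComplex.quasiIso_iff_of_zeros'] <;> try rfl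
      refine ⟨(ShortComplex.moduleCat_exact_iff_range_eq_ker _).mpr hd₀, ?_⟩
      rw [ModuleCat.epi_iff_surjective]
      exact hε
    | succ n =>
      rw [quasiIsoAt_iff_exactAt' _ _ (ChainComplex.exactAt_succ_single_obj _ _),
        HomologicalComplex.exactAt_iff' _ (n + 1 + 1) (n + 1) n (by simp) (by simp),
        ShortComplex.moduleCat_exact_iff_range_eq_ker]
      simp only [HomologicalComplex.sc', HomologicalComplex.shortComplexFunctor',
        ChainComplex.of, ChainComplex.of_d]
      exact hd n⟩

end ProjectiveResolutionOfExact

namespace IsCoherentRing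

variable (hR : IsCoherentRing R)
include hR

theorem finitePresentation_of_fg {k : ℕ} (S : Submodule R (Fin k → R)) (hS : S.FG) :
    Module.FinitePresentation R S := by
  induction k with
  | zero => infer_instance
  | succ k ih =>
    let e := (Fin.consLinearEquiv R fun _ : Fin (k + 1) => R).symm
    have := Submodule.finitePresentation_of_fg_of_prod hR ih (S.map e.toLinearMap) (hS.map _)
    exact .of_equiv (e.submoduleMap S).symm

theorem fg_ker {m n : ℕ} (f : (Fin m → R) →ₗ[R] (Fin n → R)) : (LinearMap.ker f).FG := by
  have := hR.finitePresentation_of_fg (LinearMap.range f) (Module.Finite.iff_fg.mp inferInstance)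
  exact f.ker_rangeRestrict ▸ Module.FinitePresentation.fg_ker _ f.surjective_rangeRestrict

def syzygy {m n : ℕ} (f : (Fin m → R) →ₗ[R] (Fin n → R)) :
    Σ k, (Fin k → R) →ₗ[R] (Fin m → R) :=
  ⟨_, ((Submodule.fg_iff_exists_fin_linearMap R _).mp (hR.fg_ker f)).choose_spec.choose⟩

theorem range_syzygy {m n : ℕ} (f : (Fin m → R) →ₗ[R] (Fin n → R)) :
    LinearMap.range (hR.syzygy f).2 = LinearMap.ker f :=
  ((Submodule.fg_iff_exists_fin_linearMap R _).mp (hR.fg_ker f)).choose_spec.choose_spec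

/-- The target of the `(k + 1)`-st map is the source of the `k`-th one by definition, so the maps
form a chain complex without casts. -/
def syzygyChain (f₀ : Σ m n : ℕ, (Fin m → R) →ₗ[R] (Fin n → R)) :
    ℕ → Σ m n : ℕ, (Fin m → R) →ₗ[R] (Fin n → R)
  | 0 => f₀
  | k + 1 => ⟨_, _, (hR.syzygy (syzygyChain f₀ k).2.2).2⟩

theorem exists_projectiveResolution_finite (N : ModuleCat.{u} R)
    [Module.FinitePresentation R N] :
    ∃ P : ProjectiveResolution N, ∀ n, Module.Finite R (P.complex.X n) := by
  obtain ⟨k, m, ε, f, hε, hf⟩ := Module.FinitePresentation.exists_fin' R N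
  let c := hR.syzygyChain ⟨m, k, f⟩
  refine ⟨ModuleCat.projectiveResolutionOfExact (fun n => ModuleCat.of R (Fin (c n).2.1 → R))
    (fun n => ModuleCat.ofHom (c n).2.2) (ModuleCat.ofHom ε) (fun n => hR.range_syzygy _)
    hf.linearMap_ker_eq.symm hε, fun n => ?_⟩
  show Module.Finite R (Fin _ → R)
  infer_instance

end IsCoherentRing

/-- **Theorem.** Let `R` be a coherent commutative ring, `𝔗` a torsion theory, `𝔞` a
finitely generated ideal of `R` and `M ∈ 𝔗`. Then the local cohomology modules
`H^i_𝔞(M) = colim_n Ext^i_R(R/𝔞ⁿ, M)` belong to `𝔗` for all `i ≥ 0`. -/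
theorem localCohomology_mem_of_mem_of_isCoherentRing (hR : IsCoherentRing R)
    (T : Set (ModuleCat.{u} R)) (hT : IsTorsionTheory R T)
    (a : Ideal R) (ha : a.FG) (M : Type u) [AddCommGroup M] [Module R M]
    (hM : ModuleCat.of R M ∈ T) :
    ∀ i : ℕ, (localCohomology a i).obj (ModuleCat.of R M) ∈ T := by
  intro i
  have := localCohomology.hasColimitDiagram.{u, 0} (localCohomology.idealPowersDiagram a) i
  refine hT.mem_of_iso (Limits.colimitObjIsoColimitCompEvaluation _ _).symm
    (hT.colimit_mem _ fun n => ?_)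
  have : Module.FinitePresentation R (R ⧸ a ^ n.unop.unop) :=
    Module.finitePresentation_of_surjective _ (Submodule.mkQ_surjective _)
      (by rw [Submodule.ker_mkQ]; exact ha.pow)
  obtain ⟨P, hP⟩ := hR.exists_projectiveResolution_finite (ModuleCat.of R (R ⧸ a ^ n.unop.unop))
  exact hT.ext_mem_of_projectiveResolution hM P hP i
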